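/- Let d ≥ 1, a > 0, and let K : ℝ^d × ℝ^d → ℝ≥0 satisfy K(z, z') ≤ C t^{-d/2} exp(-|z - z'|²/(C t)) and the invariance property ∫ K(z, z') χ(z') dz' = χ(z) for all z, where χ : ℝ^d → ℝ satisfies |χ - 1| ∈ Lᵖ(ℝ^d) for some p > 1. Then |∫ K(z, z') dz' - χ(z)| ≤ C' t^{-d/(2p)} ‖χ - 1‖_{Lᵖ} for a constant C' = C'(C, d, p). -/

import Mathlib

/-!
Since `K z` reproduces `χ`, `∫ K z - χ z = -∫ K z · (χ - 1)`. Hölder's inequality with the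
conjugate exponent `q` bounds this by `‖K z‖_q ‖χ - 1‖_p`, and integrating the `q`-th power of
the Gaussian bound gives `‖K z‖_q ≤ C t^{-d/2} (π C t / q)^{d/(2q)} = C' t^{-d/(2p)}`,
because `-d/2 + d/(2q) = -d/(2p)`.
-/

open MeasureTheory Real Module

section Gaussian

variable {V : Type*} [NormedAddCommGroup V] [InnerProductSpace ℝ V] [FiniteDimensional ℝ V]
  [MeasurableSpace V] [BorelSpace V]

theorem integral_exp_neg_mul_norm_sub_sq {b : ℝ} (hb : 0 < b) (z : V) :
    ∫ w : V, exp (-b * ‖z - w‖ ^ 2) = (π / b) ^ (finrank ℝ V / 2 : ℝ) := by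
  rw [integral_sub_left_eq_self (fun w => exp (-b * ‖w‖ ^ 2)) volume z,
    GaussianFourier.integral_rexp_neg_mul_sq_norm hb]

theorem integrable_exp_neg_mul_norm_sub_sq {b : ℝ} (hb : 0 < b) (z : V) :
    Integrable (fun w : V => exp (-b * ‖z - w‖ ^ 2)) :=
  .of_integral_ne_zero (by rw [integral_exp_neg_mul_norm_sub_sq hb z]; positivity)

theorem mul_exp_neg_div_rpow {A : ℝ} (hA : 0 ≤ A) (s q x : ℝ) :
    (A * exp (-x / s)) ^ q = A ^ q * exp (-(q / s) * x) := by
  rw [mul_rpow hA (exp_nonneg _), ← exp_mul]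
  ring_nf

variable {A s q : ℝ}

theorem integral_gaussian_rpow (hA : 0 ≤ A) (hs : 0 < s) (hq : 0 < q) (z : V) :
    ∫ w : V, (A * exp (-‖z - w‖ ^ 2 / s)) ^ q = A ^ q * (π * s / q) ^ (finrank ℝ V / 2 : ℝ) := by
  simp_rw [mul_exp_neg_div_rpow hA, integral_const_mul,
    integral_exp_neg_mul_norm_sub_sq (div_pos hq hs)]
  congr 2
  field_simp

theorem memLp_gaussian (hA : 0 ≤ A) (hs : 0 < s) (hq : 0 < q) (z : V) :
    MemLp (fun w : V => A * exp (-‖z - w‖ ^ 2 / s)) (ENNReal.ofReal q) := by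
  have hcont : Continuous fun w : V => A * exp (-‖z - w‖ ^ 2 / s) := by fun_prop
  have hq0 : ENNReal.ofReal q ≠ 0 := (ENNReal.ofReal_pos.2 hq).ne'
  rw [← memLp_norm_rpow_iff hcont.aestronglyMeasurable hq0 ENNReal.ofReal_ne_top,
    ENNReal.div_self hq0 ENNReal.ofReal_ne_top, memLp_one_iff_integrable,
    ENNReal.toReal_ofReal hq.le]
  refine ((integrable_exp_neg_mul_norm_sub_sq (div_pos hq hs) z).const_mul (A ^ q)).congr
    (.of_forall fun w => ?_)
  dsimp only
  rw [norm_of_nonneg (by positivity), mul_exp_neg_div_rpow hA]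

theorem eLpNorm_gaussian_toReal (hA : 0 ≤ A) (hs : 0 < s) (hq : 0 < q) (z : V) :
    (eLpNorm (fun w : V => A * exp (-‖z - w‖ ^ 2 / s)) (ENNReal.ofReal q)).toReal =
      A * (π * s / q) ^ (finrank ℝ V / (2 * q) : ℝ) := by
  rw [(memLp_gaussian hA hs hq z).eLpNorm_eq_integral_rpow_norm
      (ENNReal.ofReal_pos.2 hq).ne' ENNReal.ofReal_ne_top,
    ENNReal.toReal_ofReal hq.le, ENNReal.toReal_ofReal (by positivity)]
  have habs (w : V) : |A * exp (-‖z - w‖ ^ 2 / s)| = A * exp (-‖z - w‖ ^ 2 / s) :=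
    abs_of_nonneg (by positivity)
  simp_rw [Real.norm_eq_abs, habs]
  rw [integral_gaussian_rpow hA hs hq, mul_rpow (rpow_nonneg hA q) (by positivity),
    ← rpow_mul hA, ← rpow_mul (by positivity : (0:ℝ) ≤ π * s / q), mul_inv_cancel₀ hq.ne', rpow_one]
  congr 2
  field_simp

variable {E : Type*} [NormedAddCommGroup E] {f : V → E} {z : V}

theorem memLp_of_norm_le_gaussian (hf : AEStronglyMeasurable f) (hs : 0 < s) (hq : 0 < q)
    (hle : ∀ w, ‖f w‖ ≤ A * exp (-‖z - w‖ ^ 2 / s)) : MemLp f (ENNReal.ofReal q) := by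
  have hA : 0 ≤ A := nonneg_of_mul_nonneg_left ((norm_nonneg _).trans (hle z)) (exp_pos _)
  refine (memLp_gaussian hA hs hq z).of_le hf (.of_forall fun w => ?_)
  exact (hle w).trans (le_abs_self _)

theorem eLpNorm_toReal_le_of_norm_le_gaussian (hs : 0 < s) (hq : 0 < q)
    (hle : ∀ w, ‖f w‖ ≤ A * exp (-‖z - w‖ ^ 2 / s)) :
    (eLpNorm f (ENNReal.ofReal q)).toReal ≤ A * (π * s / q) ^ (finrank ℝ V / (2 * q) : ℝ) := by
  have hA : 0 ≤ A := nonneg_of_mul_nonneg_left ((norm_nonneg _).trans (hle z)) (exp_pos _)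
  rw [← eLpNorm_gaussian_toReal hA hs hq z]
  exact ENNReal.toReal_mono (memLp_gaussian hA hs hq z).eLpNorm_ne_top (eLpNorm_mono_real hle)

end Gaussian

section Holder

variable {α : Type*} [MeasurableSpace α] {μ : Measure α} {p q : ℝ}

theorem abs_integral_mul_le_eLpNorm_mul_eLpNorm (hpq : p.HolderConjugate q) {f g : α → ℝ}
    (hf : MemLp f (ENNReal.ofReal p) μ) (hg : MemLp g (ENNReal.ofReal q) μ) :
    |∫ x, f x * g x ∂μ| ≤
      (eLpNorm f (ENNReal.ofReal p) μ).toReal * (eLpNorm g (ENNReal.ofReal q) μ).toReal := by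
  rw [hf.eLpNorm_eq_integral_rpow_norm (ENNReal.ofReal_pos.2 hpq.pos).ne' ENNReal.ofReal_ne_top,
    hg.eLpNorm_eq_integral_rpow_norm (ENNReal.ofReal_pos.2 hpq.symm.pos).ne' ENNReal.ofReal_ne_top,
    ENNReal.toReal_ofReal hpq.nonneg, ENNReal.toReal_ofReal hpq.symm.nonneg,
    ENNReal.toReal_ofReal (by positivity), ENNReal.toReal_ofReal (by positivity)]
  calc |∫ x, f x * g x ∂μ| ≤ ∫ x, ‖f x‖ * ‖g x‖ ∂μ := by
        simpa only [norm_mul, Real.norm_eq_abs] using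
          norm_integral_le_integral_norm (μ := μ) (fun x => f x * g x)
    _ ≤ _ := by simpa only [one_div] using integral_mul_norm_le_Lp_mul_Lq hpq hf hg

theorem abs_integral_sub_le_of_integral_mul_eq (hpq : p.HolderConjugate q) {K χ : α → ℝ}
    {c : ℝ} (hK : Integrable K μ) (hKq : MemLp K (ENNReal.ofReal q) μ)
    (hχ : MemLp (fun x => χ x - 1) (ENNReal.ofReal p) μ) (hinv : ∫ x, K x * χ x ∂μ = c) :
    |∫ x, K x ∂μ - c| ≤ (eLpNorm K (ENNReal.ofReal q) μ).toReal *
      (eLpNorm (fun x => χ x - 1) (ENNReal.ofReal p) μ).toReal := by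
  have : ENNReal.HolderTriple (ENNReal.ofReal q) (ENNReal.ofReal p) 1 :=
    hpq.symm.ennrealOfReal
  have hsplit : ∫ x, K x * (χ x - 1) ∂μ + ∫ x, K x ∂μ = c := by
    rw [← integral_add (memLp_one_iff_integrable.1 (hχ.mul' hKq)) hK, ← hinv]
    congr with x
    ring
  rw [← hsplit, sub_add_cancel_right, abs_neg]
  exact abs_integral_mul_le_eLpNorm_mul_eLpNorm hpq.symm hKq hχ

end Holder

theorem Real.HolderConjugate.rpow_neg_div_two_mul_mul_rpow {p q : ℝ} (hpq : p.HolderConjugate q)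
    (n : ℝ) {a t : ℝ} (ha : 0 ≤ a) (ht : 0 < t) :
    t ^ (-n / 2) * (a * t) ^ (n / (2 * q)) = a ^ (n / (2 * q)) * t ^ (-n / (2 * p)) := by
  rw [mul_rpow ha ht.le, mul_left_comm, ← rpow_add ht]
  congr 2
  have hpq' := hpq.inv_add_inv_eq_one
  have := hpq.pos
  have := hpq.symm.pos
  field_simp at hpq' ⊢
  linear_combination n * hpq'

theorem stmt13_general (d : ℕ) (C : ℝ) (hC : 0 < C) (p : ℝ) (hp : 1 < p) :
    ∃ C' : ℝ, 0 < C' ∧ ∀ t : ℝ, 0 < t →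
      ∀ K : EuclideanSpace ℝ (Fin d) → EuclideanSpace ℝ (Fin d) → ℝ,
      ∀ χ : EuclideanSpace ℝ (Fin d) → ℝ,
      (∀ z, Measurable (K z)) → Measurable χ →
      (∀ z z', 0 ≤ K z z') →
      (∀ z z', K z z' ≤ C * t ^ (-(d : ℝ) / 2) * Real.exp (-‖z - z'‖ ^ 2 / (C * t))) →
      (∀ z, (∫ z', K z z' * χ z') = χ z) →
      MemLp (fun z => χ z - 1) (ENNReal.ofReal p) →
      ∀ z, |(∫ z', K z z') - χ z| ≤
        C' * t ^ (-(d : ℝ) / (2 * p)) *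
          (eLpNorm (fun z => χ z - 1) (ENNReal.ofReal p) volume).toReal := by
  obtain ⟨q, hpq⟩ : ∃ q, p.HolderConjugate q := ⟨_, .conjExponent hp⟩
  have hq := hpq.symm.pos
  refine ⟨C * (π * C / q) ^ ((d : ℝ) / (2 * q)), by positivity, ?_⟩
  intro t ht K χ hKm _ hK0 hKb hinv hχ z
  have hCt : 0 < C * t := mul_pos hC ht
  have hKle (w) : ‖K z w‖ ≤ C * t ^ (-(d : ℝ) / 2) * exp (-‖z - w‖ ^ 2 / (C * t)) := by
    rw [norm_of_nonneg (hK0 z w)]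
    exact hKb z w
  have hK1 : Integrable (K z) := memLp_one_iff_integrable.1 <| ENNReal.ofReal_one ▸
    memLp_of_norm_le_gaussian (hKm z).aestronglyMeasurable hCt one_pos hKle
  have hKq := memLp_of_norm_le_gaussian (hKm z).aestronglyMeasurable hCt hq hKle
  calc |(∫ w, K z w) - χ z|
      ≤ (eLpNorm (K z) (ENNReal.ofReal q) volume).toReal *
          (eLpNorm (fun z => χ z - 1) (ENNReal.ofReal p) volume).toReal :=
        abs_integral_sub_le_of_integral_mul_eq hpq hK1 hKq hχ (hinv z)
    _ ≤ C * t ^ (-(d : ℝ) / 2) * (π * (C * t) / q) ^ ((d : ℝ) / (2 * q)) *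
          (eLpNorm (fun z => χ z - 1) (ENNReal.ofReal p) volume).toReal := by
        gcongr
        simpa only [finrank_euclideanSpace_fin] using
          eLpNorm_toReal_le_of_norm_le_gaussian hCt hq hKle
    _ = C * (π * C / q) ^ ((d : ℝ) / (2 * q)) * t ^ (-(d : ℝ) / (2 * p)) *
          (eLpNorm (fun z => χ z - 1) (ENNReal.ofReal p) volume).toReal := by
        rw [show π * (C * t) / q = π * C / q * t by ring, mul_assoc C,
          hpq.rpow_neg_div_two_mul_mul_rpow _ (by positivity) ht]
        ring

theorem stmt13 (d : ℕ) (hd : 1 ≤ d) (C : ℝ) (hC : 0 < C) (p : ℝ) (hp : 1 < p) :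
    ∃ C' : ℝ, 0 < C' ∧ ∀ t : ℝ, 0 < t →
      ∀ K : EuclideanSpace ℝ (Fin d) → EuclideanSpace ℝ (Fin d) → ℝ,
      ∀ χ : EuclideanSpace ℝ (Fin d) → ℝ,
      (∀ z, Measurable (K z)) → Measurable χ →
      (∀ z z', 0 ≤ K z z') →
      (∀ z z', K z z' ≤ C * t ^ (-(d : ℝ) / 2) * Real.exp (-‖z - z'‖ ^ 2 / (C * t))) →
      (∀ z, (∫ z', K z z' * χ z') = χ z) →
      MemLp (fun z => χ z - 1) (ENNReal.ofReal p) →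
      ∀ z, |(∫ z', K z z') - χ z| ≤
        C' * t ^ (-(d : ℝ) / (2 * p)) *
          (eLpNorm (fun z => χ z - 1) (ENNReal.ofReal p) volume).toReal :=
  stmt13_general d C hC p hp
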